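/- arXiv:1308.2263 — 3 statements merged into one kernel-verified Lean document; each statement's English description precedes it below -/
import Mathlib

section
/- For orthonormal vectors u, v, w in ℝ^7, the value of the 3-form φ₀ = e^{123}+e^{145}+e^{167}+e^{246}−e^{257}−e^{347}−e^{356} on (u,v,w) satisfies |φ₀(u,v,w)| ≤ 1. -/
/-!
With the `G₂` cross product `×` on `ℝ⁷` one has `φ₀(u, v, w) = ⟪u × v, w⟫` and
`‖u × v‖² = ‖u‖² ‖v‖² - ⟪u, v⟫²`. For orthonormal `u, v, w` the vectors `u × v` and `w` are unit
vectors, so the Cauchy–Schwarz inequality gives `|φ₀(u, v, w)| ≤ 1`.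
-/

noncomputable section

open RealInnerProductSpace

/-- The elementary 3-form `e^{ijk} = dx^i ∧ dx^j ∧ dx^k` on `ℝ⁷`, evaluated on
`(u, v, w)` as a determinant. -/
def eform (i j k : Fin 7) (u v w : EuclideanSpace ℝ (Fin 7)) : ℝ :=
  Matrix.det !![u i, u j, u k; v i, v j, v k; w i, w j, w k]

/-- The standard associative 3-form
`φ₀ = e^{123} + e^{145} + e^{167} + e^{246} − e^{257} − e^{347} − e^{356}`
(indices shifted to start at 0). -/
def phi0 (u v w : EuclideanSpace ℝ (Fin 7)) : ℝ :=
  eform 0 1 2 u v w + eform 0 3 4 u v w + eform 0 5 6 u v w + eform 1 3 5 u v w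
    - eform 1 4 6 u v w - eform 2 3 6 u v w - eform 2 4 5 u v w

/-- The coordinates are `(u × v)ₖ = φ₀(u, v, eₖ)`. -/
def g2Cross (u v : EuclideanSpace ℝ (Fin 7)) : EuclideanSpace ℝ (Fin 7) :=
  WithLp.toLp 2
    ![ (u 1 * v 2 - u 2 * v 1) + (u 3 * v 4 - u 4 * v 3) + (u 5 * v 6 - u 6 * v 5),
       -(u 0 * v 2 - u 2 * v 0) + (u 3 * v 5 - u 5 * v 3) - (u 4 * v 6 - u 6 * v 4),
       (u 0 * v 1 - u 1 * v 0) - (u 3 * v 6 - u 6 * v 3) - (u 4 * v 5 - u 5 * v 4),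
       -(u 0 * v 4 - u 4 * v 0) - (u 1 * v 5 - u 5 * v 1) + (u 2 * v 6 - u 6 * v 2),
       (u 0 * v 3 - u 3 * v 0) + (u 1 * v 6 - u 6 * v 1) + (u 2 * v 5 - u 5 * v 2),
       -(u 0 * v 6 - u 6 * v 0) + (u 1 * v 3 - u 3 * v 1) - (u 2 * v 4 - u 4 * v 2),
       (u 0 * v 5 - u 5 * v 0) - (u 1 * v 4 - u 4 * v 1) - (u 2 * v 3 - u 3 * v 2) ]

theorem phi0_eq_inner_g2Cross (u v w : EuclideanSpace ℝ (Fin 7)) :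
    phi0 u v w = ⟪g2Cross u v, w⟫ := by
  simp [phi0, eform, g2Cross, PiLp.inner_apply, Fin.sum_univ_seven, Matrix.det_fin_three]
  ring

theorem inner_g2Cross_self (u v : EuclideanSpace ℝ (Fin 7)) :
    ⟪g2Cross u v, g2Cross u v⟫ = ⟪u, u⟫ * ⟪v, v⟫ - ⟪u, v⟫ ^ 2 := by
  simp only [g2Cross, PiLp.inner_apply, RCLike.inner_apply, conj_trivial,
    Fin.sum_univ_seven, Matrix.cons_val]
  ring

theorem abs_phi0_le_one_general (u v w : EuclideanSpace ℝ (Fin 7))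
    (huu : ⟪u, u⟫ = 1) (hvv : ⟪v, v⟫ = 1) (hww : ⟪w, w⟫ = 1)
    (huv : ⟪u, v⟫ = 0) :
    |phi0 u v w| ≤ 1 := by
  have hcross : ⟪g2Cross u v, g2Cross u v⟫ = 1 := by
    rw [inner_g2Cross_self, huu, hvv, huv]
    norm_num
  rw [abs_le_one_iff_mul_self_le_one, phi0_eq_inner_g2Cross]
  calc ⟪g2Cross u v, w⟫ * ⟪g2Cross u v, w⟫
      ≤ ⟪g2Cross u v, g2Cross u v⟫ * ⟪w, w⟫ := real_inner_mul_inner_self_le _ _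
    _ = 1 := by rw [hcross, hww, one_mul]

/-- For orthonormal vectors `u, v, w ∈ ℝ⁷`, `|φ₀(u,v,w)| ≤ 1`. -/
theorem abs_phi0_le_one (u v w : EuclideanSpace ℝ (Fin 7))
    (huu : ⟪u, u⟫ = 1) (hvv : ⟪v, v⟫ = 1) (hww : ⟪w, w⟫ = 1)
    (huv : ⟪u, v⟫ = 0) (huw : ⟪u, w⟫ = 0) (hvw : ⟪v, w⟫ = 0) :
    |phi0 u v w| ≤ 1 :=
  abs_phi0_le_one_general u v w huu hvv hww huv
end
end

section
/- For orthonormal u, v, w in the imaginary octonions, with χ(u,v,w) = −u × (v × w) − ⟨u,v⟩w + ⟨u,w⟩v and φ₀(u,v,w) = ⟨u × v, w⟩, the identity φ₀(u,v,w)² + |χ(u,v,w)|² = 1 holds. -/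
/-!
Since `u` is orthogonal to `v` and `w`, `χ(u,v,w) = -u × (v × w)`. The cross product obeys the
Lagrange identity `|x × y|² = |x|²|y|² - ⟨x,y⟩²`, which is the composition law `|ȳx| = |x||y|`
combined with `Re (ȳx) = ⟨x,y⟩`. It makes `v × w` a unit vector and then gives
`|χ|² = 1 - ⟨u, v × w⟩²`, while `⟨u, v × w⟩ = φ₀(u,v,w)` by the cyclic symmetry of `φ₀` on
imaginary octonions.
-/

noncomputable section

/-- Octonions via the Cayley–Dickson construction on the quaternions. -/
abbrev Oct : Type := Quaternion ℝ × Quaternion ℝ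

namespace Oct

/-- Cayley–Dickson multiplication. -/
def mul (x y : Oct) : Oct :=
  (x.1 * y.1 - star y.2 * x.2, y.2 * x.1 + x.2 * star y.1)

/-- Octonion conjugation. -/
def conj (x : Oct) : Oct := (star x.1, -x.2)

/-- Real part. -/
def re (x : Oct) : ℝ := x.1.re

/-- Imaginary part. -/
def im (x : Oct) : Oct := (x.1 - ((x.1.re : ℝ) : Quaternion ℝ), x.2)

/-- The standard inner product `⟨x, y⟩ = Re (x * conj y)`. -/
def inner (x y : Oct) : ℝ := (mul x (conj y)).1.re

/-- The cross product `u × v = Im (conj v * u)` on imaginary octonions. -/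
def cross (u v : Oct) : Oct := im (mul (conj v) u)

/-- `x` is an imaginary octonion. -/
def IsIm (x : Oct) : Prop := re x = 0

end Oct

/-- The associative 3-form `φ₀(u,v,w) = ⟨u × v, w⟩`. -/
def phi (u v w : Oct) : ℝ := Oct.inner (Oct.cross u v) w

/-- `χ(u,v,w) = −u × (v × w) − ⟨u,v⟩ w + ⟨u,w⟩ v`. -/
def chi (u v w : Oct) : Oct :=
  -Oct.cross u (Oct.cross v w) - Oct.inner u v • w + Oct.inner u w • v

open scoped RealInnerProductSpace

namespace Oct

theorem inner_eq_add (x y : Oct) : inner x y = ⟪x.1, y.1⟫ + ⟪x.2, y.2⟫ := by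
  simp only [inner, mul, conj, star_neg, neg_mul, sub_neg_eq_add, star_star, Quaternion.re_add,
    Quaternion.re_mul, Quaternion.re_star, Quaternion.imI_star, mul_neg, Quaternion.imJ_star,
    Quaternion.imK_star, Quaternion.inner_def, add_right_inj]
  ring

theorem inner_comm (x y : Oct) : inner x y = inner y x := by
  rw [inner_eq_add, inner_eq_add, real_inner_comm x.1, real_inner_comm x.2]

theorem inner_neg_neg (x y : Oct) : inner (-x) (-y) = inner x y := by
  simp only [inner_eq_add, Prod.fst_neg, Prod.snd_neg, _root_.inner_neg_neg]

theorem re_mul_conj_left (x y : Oct) : re (mul (conj y) x) = inner x y := by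
  simp only [re, inner, mul, conj, mul_neg, sub_neg_eq_add, neg_mul, star_neg, star_star,
    Quaternion.re_add, Quaternion.re_mul, Quaternion.re_star, Quaternion.imI_star,
    Quaternion.imJ_star, Quaternion.imK_star]
  ring

theorem inner_im_self (z : Oct) : inner (im z) (im z) = inner z z - re z ^ 2 := by
  simp only [re, inner, mul, im, Quaternion.sub_re_self, conj, Quaternion.star_im, mul_neg,
    star_neg, neg_mul, sub_neg_eq_add, neg_neg, neg_add_cancel, Quaternion.re_add, Quaternion.re_neg,
    Quaternion.re_mul, Quaternion.re_im, mul_zero, Quaternion.imI_im, zero_sub, Quaternion.imJ_im,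
    Quaternion.imK_im, neg_sub, Quaternion.re_star, Quaternion.imI_star, Quaternion.imJ_star,
    Quaternion.imK_star, star_star]
  ring

theorem inner_conj_conj (x y : Oct) : inner (conj x) (conj y) = inner x y := by
  simp [inner_eq_add, conj, Quaternion.inner_def, Quaternion.re_mul]

theorem inner_mul_self (x y : Oct) : inner (mul x y) (mul x y) = inner x x * inner y y := by
  simp only [inner, mul, conj, star_sub, star_mul, star_star, neg_add_rev, star_add, star_neg,
    Quaternion.re_sub, Quaternion.re_mul, Quaternion.re_star, Quaternion.imI_star, neg_mul,
    sub_neg_eq_add, Quaternion.imJ_star, Quaternion.imK_star, mul_neg, neg_neg, Quaternion.imI_sub,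
    Quaternion.imI_mul, Quaternion.imJ_sub, Quaternion.imJ_mul, Quaternion.imK_sub,
    Quaternion.imK_mul, Quaternion.re_add, Quaternion.re_neg, neg_sub, Quaternion.imI_add,
    Quaternion.imI_neg, Quaternion.imJ_add, Quaternion.imJ_neg, Quaternion.imK_add,
    Quaternion.imK_neg, neg_add_cancel]
  ring

theorem inner_cross_self (x y : Oct) :
    inner (cross x y) (cross x y) = inner x x * inner y y - inner x y ^ 2 := by
  rw [cross, inner_im_self, inner_mul_self, inner_conj_conj, re_mul_conj_left, mul_comm]

theorem inner_cross_cyclic {u v w : Oct} (hu : IsIm u) (hv : IsIm v) (hw : IsIm w) :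
    inner (cross u v) w = inner (cross v w) u := by
  simp only [IsIm, re] at hu hv hw
  simp only [inner, mul, cross, im, conj, mul_neg, sub_neg_eq_add, neg_mul, Quaternion.re_add,
    Quaternion.re_mul, Quaternion.re_star, hv, hu, mul_zero, Quaternion.imI_star, zero_add,
    Quaternion.imJ_star, Quaternion.imK_star, Quaternion.coe_add, Quaternion.coe_mul, star_neg,
    star_star, Quaternion.re_sub, Quaternion.re_coe, Quaternion.imI_coe, sub_zero,
    Quaternion.imJ_coe, Quaternion.imK_coe, sub_self, hw, Quaternion.imI_sub, Quaternion.imI_add,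
    Quaternion.imI_mul, zero_mul, add_zero, Quaternion.imJ_sub, Quaternion.imJ_add,
    Quaternion.imJ_mul, Quaternion.imK_sub, Quaternion.imK_add, Quaternion.imK_mul,
    Quaternion.re_neg, neg_add_rev, Quaternion.imI_neg, neg_neg, Quaternion.imJ_neg,
    Quaternion.imK_neg]
  ring

end Oct

theorem chi_eq_neg_cross_cross {u v w : Oct} (huv : Oct.inner u v = 0) (huw : Oct.inner u w = 0) :
    chi u v w = -Oct.cross u (Oct.cross v w) := by
  simp [chi, huv, huw]

theorem phi_eq_inner_cross {u v w : Oct} (hu : Oct.IsIm u) (hv : Oct.IsIm v) (hw : Oct.IsIm w) :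
    phi u v w = Oct.inner u (Oct.cross v w) := by
  rw [phi, Oct.inner_cross_cyclic hu hv hw, Oct.inner_comm]

/-- For orthonormal imaginary octonions `u, v, w`,
`φ₀(u,v,w)² + |χ(u,v,w)|² = 1`. -/
theorem phi_sq_add_chi_normsq (u v w : Oct)
    (hu : Oct.IsIm u) (hv : Oct.IsIm v) (hw : Oct.IsIm w)
    (huu : Oct.inner u u = 1) (hvv : Oct.inner v v = 1) (hww : Oct.inner w w = 1)
    (huv : Oct.inner u v = 0) (huw : Oct.inner u w = 0) (hvw : Oct.inner v w = 0) :
    phi u v w ^ 2 + Oct.inner (chi u v w) (chi u v w) = 1 := by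
  have hvw_unit : Oct.inner (Oct.cross v w) (Oct.cross v w) = 1 := by
    rw [Oct.inner_cross_self, hvv, hww, hvw]; ring
  rw [chi_eq_neg_cross_cross huv huw, Oct.inner_neg_neg, Oct.inner_cross_self, hvw_unit, huu,
    phi_eq_inner_cross hu hv hw]
  ring
end
end

section
/- In the ring R = ℤ[x,y]/(x⁴, x³ − y³, x² − y², xy − yx) with x, y in degree 4, the degree-12 component is generated by x³ and the degree-8 component is free of rank 2, generated by x² and xy. -/
/-!
Modulo `I` we have `y² = x²` and `y³ = x³`, so every monomial of degree 3 in `x, y` becomes `x³`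
and every monomial of degree 2 becomes `x²` or `xy`; this gives the spanning statements.
For independence, the substitutions `x ↦ t, y ↦ ±t` into `ℤ[t]/(t³)` kill `I` and send
`a x² + b xy` to `(a ± b) t²`, and `t²` belongs to the standard `ℤ`-basis of `ℤ[t]/(t³)`.
-/

open MvPolynomial

noncomputable section

/-- The generator `x` of degree 4. -/
def x : MvPolynomial (Fin 2) ℤ := X 0

/-- The generator `y` of degree 4. -/
def y : MvPolynomial (Fin 2) ℤ := X 1

/-- The defining ideal `(x⁴, x³ − y³, x² − y²)` (the relation `xy − yx = 0`
being automatic in a commutative ring). -/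
def I : Ideal (MvPolynomial (Fin 2) ℤ) :=
  Ideal.span {x ^ 4, x ^ 3 - y ^ 3, x ^ 2 - y ^ 2}

/-- The weights: `|x| = |y| = 4`. -/
def w : Fin 2 → ℕ := ![4, 4]

theorem MvPolynomial.IsWeightedHomogeneous.apply_mem_of_monomial {σ R M N : Type*}
    [CommSemiring R] [AddCommMonoid M] [AddCommMonoid N] [Module R N] {w : σ → M} {m : M}
    {p : MvPolynomial σ R} (hp : p.IsWeightedHomogeneous w m) (f : MvPolynomial σ R →ₗ[R] N)
    {P : Submodule R N} (h : ∀ d, Finsupp.weight w d = m → f (monomial d 1) ∈ P) : f p ∈ P := by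
  rw [← p.support_sum_monomial_coeff, map_sum]
  refine Submodule.sum_mem _ fun d hd => ?_
  rw [← mul_one (coeff d p), ← smul_eq_mul, ← smul_monomial, map_smul]
  exact P.smul_mem _ (h d (hp (mem_support_iff.1 hd)))

theorem AdjoinRoot.smul_root_X_pow_pow_eq_zero_iff {R : Type*} [CommRing R] [Nontrivial R]
    {n k : ℕ} (hk : k < n) {c : R} :
    c • root (Polynomial.X ^ n : Polynomial R) ^ k = 0 ↔ c = 0 := by
  refine ⟨fun h => ?_, fun h => by rw [h, zero_smul]⟩
  let pb := powerBasis' (Polynomial.monic_X_pow (R := R) n)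
  let i : Fin pb.dim := ⟨k, by rwa [powerBasis'_dim, Polynomial.natDegree_X_pow]⟩
  have hi : pb.basis i = root (Polynomial.X ^ n : Polynomial R) ^ k := by
    rw [pb.basis_eq_pow, powerBasis'_gen]
  have := congrArg (pb.basis.repr · i) h
  simpa only [← hi, map_smul, Module.Basis.repr_self, Finsupp.smul_single, smul_eq_mul, mul_one,
    Finsupp.single_eq_same, map_zero, Finsupp.coe_zero, Pi.zero_apply] using this

theorem weight_w (d : Fin 2 →₀ ℕ) : Finsupp.weight w d = 4 * (d 0 + d 1) := by
  simp [Finsupp.weight_apply, Finsupp.sum_fintype, w]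
  ring

theorem monomial_one_eq_x_pow_mul_y_pow (d : Fin 2 →₀ ℕ) :
    monomial d (1 : ℤ) = x ^ d 0 * y ^ d 1 := by
  rw [monomial_eq, C_1, one_mul, Finsupp.prod_pow, Fin.prod_univ_two]
  rfl

theorem mk_y_sq : Ideal.Quotient.mk I (y ^ 2) = Ideal.Quotient.mk I (x ^ 2) :=
  (Ideal.Quotient.eq.mpr (Ideal.subset_span (by simp))).symm

theorem mk_y_cube : Ideal.Quotient.mk I (y ^ 3) = Ideal.Quotient.mk I (x ^ 3) :=
  (Ideal.Quotient.eq.mpr (Ideal.subset_span (by simp))).symm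

theorem mk_x_pow_mul_y_pow_of_add_eq_three {i j : ℕ} (h : i + j = 3) :
    Ideal.Quotient.mk I (x ^ i * y ^ j) = Ideal.Quotient.mk I (x ^ 3) := by
  have h2 := mk_y_sq
  have h3 := mk_y_cube
  simp only [map_pow, map_mul] at h2 h3 ⊢
  obtain ⟨rfl, rfl⟩ | ⟨rfl, rfl⟩ | ⟨rfl, rfl⟩ | ⟨rfl, rfl⟩ :
      (i = 0 ∧ j = 3) ∨ (i = 1 ∧ j = 2) ∨ (i = 2 ∧ j = 1) ∨ (i = 3 ∧ j = 0) := by omega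
  · linear_combination h3
  · linear_combination Ideal.Quotient.mk I x * h2
  · linear_combination h3 - Ideal.Quotient.mk I y * h2
  · ring

theorem mk_x_pow_mul_y_pow_mem_span_of_add_eq_two {i j : ℕ} (h : i + j = 2) :
    Ideal.Quotient.mk I (x ^ i * y ^ j) ∈
      Submodule.span ℤ {Ideal.Quotient.mk I (x ^ 2), Ideal.Quotient.mk I (x * y)} := by
  obtain ⟨rfl, rfl⟩ | ⟨rfl, rfl⟩ | ⟨rfl, rfl⟩ :
      (i = 0 ∧ j = 2) ∨ (i = 1 ∧ j = 1) ∨ (i = 2 ∧ j = 0) := by omega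
  · rw [pow_zero, one_mul, mk_y_sq]
    exact Submodule.subset_span (by simp)
  · rw [pow_one, pow_one]
    exact Submodule.subset_span (by simp)
  · rw [pow_zero, mul_one]
    exact Submodule.subset_span (by simp)

theorem mk_mem_span_x_cube {p : MvPolynomial (Fin 2) ℤ} (hp : p.IsWeightedHomogeneous w 12) :
    Ideal.Quotient.mk I p ∈ ℤ ∙ Ideal.Quotient.mk I (x ^ 3) := by
  refine hp.apply_mem_of_monomial (Ideal.Quotient.mkₐ ℤ I).toLinearMap fun d hd => ?_
  rw [weight_w] at hd
  simp only [AlgHom.toLinearMap_apply, Ideal.Quotient.mkₐ_eq_mk, monomial_one_eq_x_pow_mul_y_pow,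
    mk_x_pow_mul_y_pow_of_add_eq_three (by omega : d 0 + d 1 = 3)]
  exact Submodule.mem_span_singleton_self _

theorem mk_mem_span_x_sq_x_mul_y {p : MvPolynomial (Fin 2) ℤ} (hp : p.IsWeightedHomogeneous w 8) :
    Ideal.Quotient.mk I p ∈
      Submodule.span ℤ {Ideal.Quotient.mk I (x ^ 2), Ideal.Quotient.mk I (x * y)} := by
  refine hp.apply_mem_of_monomial (Ideal.Quotient.mkₐ ℤ I).toLinearMap fun d hd => ?_
  rw [weight_w] at hd
  simp only [AlgHom.toLinearMap_apply, Ideal.Quotient.mkₐ_eq_mk, monomial_one_eq_x_pow_mul_y_pow]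
  exact mk_x_pow_mul_y_pow_mem_span_of_add_eq_two (by omega)

abbrev CubeZeroRing : Type := AdjoinRoot (Polynomial.X ^ 3 : Polynomial ℤ)

def evalRoot (ε : ℤ) : MvPolynomial (Fin 2) ℤ →ₐ[ℤ] CubeZeroRing :=
  aeval ![AdjoinRoot.root _, (ε : CubeZeroRing) * AdjoinRoot.root _]

theorem evalRoot_x (ε : ℤ) : evalRoot ε x = AdjoinRoot.root (Polynomial.X ^ 3 : Polynomial ℤ) := by
  simp [evalRoot, x]

theorem evalRoot_y (ε : ℤ) :
    evalRoot ε y = (ε : CubeZeroRing) * AdjoinRoot.root (Polynomial.X ^ 3 : Polynomial ℤ) := by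
  simp [evalRoot, y]

theorem I_le_ker_evalRoot {ε : ℤ} (hε : ε ^ 2 = 1) : I ≤ RingHom.ker (evalRoot ε) := by
  have hroot : AdjoinRoot.root (Polynomial.X ^ 3 : Polynomial ℤ) ^ 3 = 0 := by
    rw [← AdjoinRoot.mk_X, ← map_pow, AdjoinRoot.mk_self]
  have hε' : (ε : CubeZeroRing) ^ 2 = 1 := by rw [← Int.cast_pow, hε, Int.cast_one]
  rw [I, Ideal.span_le]
  rintro g (rfl | rfl | rfl) <;>
    simp only [SetLike.mem_coe, RingHom.mem_ker, map_sub, map_pow, evalRoot_x, evalRoot_y]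
  · rw [pow_succ, hroot, zero_mul]
  · rw [mul_pow, hroot, mul_zero, sub_zero]
  · rw [mul_pow, hε', one_mul, sub_self]

theorem linearIndependent_mk_x_sq_mk_x_mul_y :
    LinearIndependent ℤ ![Ideal.Quotient.mk I (x ^ 2), Ideal.Quotient.mk I (x * y)] := by
  refine LinearIndependent.pair_iff.2 fun a b hab => ?_
  have hmem : a • x ^ 2 + b • (x * y) ∈ I := by
    rwa [← Ideal.Quotient.eq_zero_iff_mem, map_add, map_zsmul, map_zsmul]
  have hsigned : ∀ ε : ℤ, ε ^ 2 = 1 → a + ε * b = 0 := fun ε hε => by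
    have himage := I_le_ker_evalRoot hε hmem
    rw [RingHom.mem_ker, map_add, map_zsmul, map_zsmul, map_pow, map_mul, evalRoot_x,
      evalRoot_y, zsmul_eq_mul, zsmul_eq_mul] at himage
    rw [← AdjoinRoot.smul_root_X_pow_pow_eq_zero_iff (by norm_num : 2 < 3), zsmul_eq_mul]
    push_cast
    linear_combination himage
  have hplus := hsigned 1 (by norm_num)
  have hminus := hsigned (-1) (by norm_num)
  omega

/-- In `R = ℤ[x,y]/(x⁴, x³ − y³, x² − y², xy − yx)` with `|x| = |y| = 4`:
the degree-12 component is generated by `x³`, and the degree-8 component is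
free of rank 2, generated by `x²` and `xy`. -/
theorem free_ring_degrees :
    (∀ p : MvPolynomial (Fin 2) ℤ, p.IsWeightedHomogeneous w 12 →
      ∃ n : ℤ, Ideal.Quotient.mk I p = n • Ideal.Quotient.mk I (x ^ 3)) ∧
    (∀ p : MvPolynomial (Fin 2) ℤ, p.IsWeightedHomogeneous w 8 →
      ∃ a b : ℤ, Ideal.Quotient.mk I p =
        a • Ideal.Quotient.mk I (x ^ 2) + b • Ideal.Quotient.mk I (x * y)) ∧
    (∀ a b : ℤ, a • Ideal.Quotient.mk I (x ^ 2) + b • Ideal.Quotient.mk I (x * y) = 0 →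
      a = 0 ∧ b = 0) := by
  refine ⟨fun p hp => ?_, fun p hp => ?_,
    LinearIndependent.pair_iff.1 linearIndependent_mk_x_sq_mk_x_mul_y⟩
  · obtain ⟨n, hn⟩ := Submodule.mem_span_singleton.1 (mk_mem_span_x_cube hp)
    exact ⟨n, hn.symm⟩
  · obtain ⟨a, b, hab⟩ := Submodule.mem_span_pair.1 (mk_mem_span_x_sq_x_mul_y hp)
    exact ⟨a, b, hab.symm⟩
end
end
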